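/- Let X be an n×d real matrix with 𝕏 = XᵀX, and let D be a random n×n diagonal matrix with ‖D‖ ≤ τ almost surely, M₂ = E[D²] non-singular, and 𝕏̂ = XᵀM₂X. Suppose α > 0 satisfies ατ²·‖𝕏‖ < 2. Then sup over unit vectors w orthogonal to ker(X) of E[‖(I − α·XᵀD²X)w‖₂²] is at most 1 − α·(2 − ατ²·‖𝕏‖)·σ⁺min(𝕏̂), and this quantity is strictly less than 1. -/

import Mathlib

open Matrix MeasureTheory ProbabilityTheory Filter
open scoped BigOperators

noncomputable section

/-- Euclidean norm of a vector in `Fin n → ℝ`. -/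
def l2norm {n : ℕ} (v : Fin n → ℝ) : ℝ := Real.sqrt (∑ i, (v i) ^ 2)

/-- Spectral norm (ℓ²-operator norm) of a real matrix. -/
def specNorm {m n : ℕ} (A : Matrix (Fin m) (Fin n) ℝ) : ℝ :=
  sSup {c : ℝ | ∃ v : Fin n → ℝ, l2norm v = 1 ∧ c = l2norm (A *ᵥ v)}

/-- The smallest non-zero singular value of a real matrix:
the infimum of all positive `s` such that `s ^ 2` is an eigenvalue of `AᵀA`. -/
def sigmaMinPos {m n : ℕ} (A : Matrix (Fin m) (Fin n) ℝ) : ℝ :=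
  sInf {s : ℝ | 0 < s ∧ ∃ v : Fin n → ℝ, v ≠ 0 ∧ (Aᵀ * A) *ᵥ v = (s ^ 2) • v}

/-- `B` is the Moore–Penrose pseudo-inverse of `A` (the four Penrose conditions). -/
def IsMoorePenrose {m n : ℕ} (A : Matrix (Fin m) (Fin n) ℝ)
    (B : Matrix (Fin n) (Fin m) ℝ) : Prop :=
  A * B * A = A ∧ B * A * B = B ∧ (A * B)ᵀ = A * B ∧ (B * A)ᵀ = B * A

/-- `w` lies in the orthogonal complement of `ker A`. -/
def perpKer {m n : ℕ} (A : Matrix (Fin m) (Fin n) ℝ) (w : Fin n → ℝ) : Prop :=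
  ∀ v : Fin n → ℝ, A *ᵥ v = 0 → w ⬝ᵥ v = 0

/-- Entrywise expectation of a random matrix. -/
def matExp {Ω : Type*} [MeasurableSpace Ω] (μ : Measure Ω) {m n : ℕ}
    (M : Ω → Matrix (Fin m) (Fin n) ℝ) : Matrix (Fin m) (Fin n) ℝ :=
  Matrix.of fun i j => ∫ ω, M ω i j ∂μ

/-- Entrywise expectation of a random vector. -/
def vecExp {Ω : Type*} [MeasurableSpace Ω] (μ : Measure Ω) {n : ℕ}
    (v : Ω → Fin n → ℝ) : Fin n → ℝ :=
  fun i => ∫ ω, v ω i ∂μ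

/-!
With `B = Xᵀ D² X`, expanding the square gives
`‖(I - α B) w‖² = 1 - 2α wᵀBw + α² ‖Bw‖²`. Since `Bw = Xᵀ (D² X w)`, `‖Xᵀ‖² = ‖𝕏‖` and
`D⁴ ≤ τ² D²`, we get `‖Bw‖² ≤ τ² ‖𝕏‖ wᵀBw`, so pointwise the square is at most
`1 - α (2 - α τ² ‖𝕏‖) wᵀBw`. Taking expectations turns `wᵀBw` into `wᵀ 𝕏̂ w`. As `M₂` is a
positive diagonal matrix, `ker 𝕏̂ = ker X`, so for `w ⊥ ker X` the quadratic form `wᵀ 𝕏̂ w` only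
sees the positive eigenvalues of the positive semidefinite matrix `𝕏̂`; each of them is at least
`σ⁺min(𝕏̂)`, which is positive because there are finitely many and `𝕏̂ ≠ 0`.
-/

open scoped Matrix.Norms.L2Operator

lemma l2norm_eq_norm {n : ℕ} (v : Fin n → ℝ) : l2norm v = ‖WithLp.toLp 2 v‖ := by
  simp [l2norm, EuclideanSpace.norm_eq]

lemma specNorm_eq_l2_opNorm {m n : ℕ} (A : Matrix (Fin m) (Fin n) ℝ) : specNorm A = ‖A‖ := by
  rw [Matrix.l2_opNorm_def, ← ContinuousLinearMap.sSup_sphere_eq_norm, specNorm]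
  congr 1
  ext c
  simp only [l2norm_eq_norm, Set.mem_ofPred_eq, Set.mem_image, mem_sphere_iff_norm, sub_zero]
  exact ⟨fun ⟨v, hv, hc⟩ => ⟨WithLp.toLp 2 v, hv, hc.symm⟩,
    fun ⟨x, hx, hc⟩ => ⟨x.ofLp, hx, hc.symm⟩⟩

lemma sq_l2norm {n : ℕ} (v : Fin n → ℝ) : l2norm v ^ 2 = v ⬝ᵥ v := by
  rw [l2norm, Real.sq_sqrt (by positivity), dotProduct]
  simp only [sq]

lemma l2norm_mulVec_le {m n : ℕ} (A : Matrix (Fin m) (Fin n) ℝ) (v : Fin n → ℝ) :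
    l2norm (A *ᵥ v) ≤ ‖A‖ * l2norm v := by
  simpa [l2norm_eq_norm] using A.l2_opNorm_mulVec (WithLp.toLp 2 v)

lemma abs_le_l2_opNorm_diagonal {n : ℕ} (d : Fin n → ℝ) (i : Fin n) :
    |d i| ≤ ‖Matrix.diagonal d‖ := by
  have h : l2norm (Pi.single i 1 : Fin n → ℝ) = 1 := by
    simp [l2norm_eq_norm]
  have h' : l2norm (Pi.single i (d i)) = |d i| := by
    simp [l2norm_eq_norm]
  have := l2norm_mulVec_le (Matrix.diagonal d) (Pi.single i 1)
  rwa [Matrix.mulVec_single_one, Matrix.col_diagonal, h, mul_one, h'] at this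

lemma sq_l2norm_transpose_mulVec_le {m n : ℕ} (X : Matrix (Fin m) (Fin n) ℝ) (u : Fin m → ℝ) :
    l2norm (Xᵀ *ᵥ u) ^ 2 ≤ ‖Xᵀ * X‖ * l2norm u ^ 2 := by
  have h := l2norm_mulVec_le Xᵀ u
  have hX : ‖Xᵀ * X‖ = ‖Xᵀ‖ ^ 2 := by
    rw [sq, ← Matrix.conjTranspose_eq_transpose_of_trivial, Matrix.l2_opNorm_conjTranspose,
      Matrix.l2_opNorm_conjTranspose_mul_self]
  rw [hX, ← mul_pow]
  exact pow_le_pow_left₀ (Real.sqrt_nonneg _) h 2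

lemma dotProduct_transpose_diagonal_mul_mulVec {m n : ℕ} (X : Matrix (Fin m) (Fin n) ℝ)
    (e : Fin m → ℝ) (w : Fin n → ℝ) :
    w ⬝ᵥ ((Xᵀ * Matrix.diagonal e * X) *ᵥ w) = ∑ i, e i * (X *ᵥ w) i ^ 2 := by
  rw [← Matrix.mulVec_mulVec, ← Matrix.mulVec_mulVec, Matrix.dotProduct_mulVec,
    Matrix.vecMul_transpose, dotProduct]
  simp only [Matrix.mulVec_diagonal]
  exact Finset.sum_congr rfl fun i _ => by ring

lemma sq_l2norm_diagonal_mulVec_le {m : ℕ} {e : Fin m → ℝ} {c : ℝ} (he : ∀ i, 0 ≤ e i)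
    (hec : ∀ i, e i ≤ c) (y : Fin m → ℝ) :
    l2norm (Matrix.diagonal e *ᵥ y) ^ 2 ≤ c * ∑ i, e i * y i ^ 2 := by
  rw [sq_l2norm, dotProduct, Finset.mul_sum]
  refine Finset.sum_le_sum fun i _ => ?_
  rw [Matrix.mulVec_diagonal]
  nlinarith [mul_le_mul_of_nonneg_right (hec i) (mul_nonneg (he i) (sq_nonneg (y i)))]

lemma sq_l2norm_sub_smul_mulVec_le {m n : ℕ} (X : Matrix (Fin m) (Fin n) ℝ) {e : Fin m → ℝ}
    {c : ℝ} (he : ∀ i, 0 ≤ e i) (hec : ∀ i, e i ≤ c) {w : Fin n → ℝ} (hw : l2norm w = 1)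
    (α : ℝ) :
    l2norm ((1 - α • (Xᵀ * Matrix.diagonal e * X)) *ᵥ w) ^ 2
      ≤ 1 - α * (2 - α * c * ‖Xᵀ * X‖) * (w ⬝ᵥ ((Xᵀ * Matrix.diagonal e * X) *ᵥ w)) := by
  set B := Xᵀ * Matrix.diagonal e * X
  set q := ∑ i, e i * (X *ᵥ w) i ^ 2
  have hBw : B *ᵥ w = Xᵀ *ᵥ (Matrix.diagonal e *ᵥ (X *ᵥ w)) := by
    simp only [B, Matrix.mulVec_mulVec, Matrix.mul_assoc]
  have hBB : l2norm (B *ᵥ w) ^ 2 ≤ ‖Xᵀ * X‖ * (c * q) := by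
    rw [hBw]
    exact (sq_l2norm_transpose_mulVec_le X _).trans
      (mul_le_mul_of_nonneg_left (sq_l2norm_diagonal_mulVec_le he hec _) (norm_nonneg _))
  have hexpand : l2norm ((1 - α • B) *ᵥ w) ^ 2
      = l2norm w ^ 2 - 2 * α * (w ⬝ᵥ (B *ᵥ w)) + α ^ 2 * l2norm (B *ᵥ w) ^ 2 := by
    simp only [sq_l2norm, Matrix.sub_mulVec, Matrix.one_mulVec, Matrix.smul_mulVec,
      sub_dotProduct, dotProduct_sub, smul_dotProduct, dotProduct_smul, smul_eq_mul,
      dotProduct_comm (B *ᵥ w) w]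
    ring
  rw [hexpand, hw, dotProduct_transpose_diagonal_mul_mulVec]
  nlinarith [mul_le_mul_of_nonneg_left hBB (sq_nonneg α)]

namespace Matrix.IsHermitian

variable {ι : Type*} [Fintype ι] [DecidableEq ι] {A : Matrix ι ι ℝ}

lemma eigenvectorBasis_ne_zero (hA : A.IsHermitian) (i : ι) : ⇑(hA.eigenvectorBasis i) ≠ 0 :=
  (WithLp.ofLp_eq_zero 2).ne.2 <| hA.eigenvectorBasis.orthonormal.ne_zero i

lemma transpose_mul_self_mulVec_eigenvectorBasis (hA : A.IsHermitian) (i : ι) :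
    (Aᵀ * A) *ᵥ ⇑(hA.eigenvectorBasis i) = (hA.eigenvalues i ^ 2) • ⇑(hA.eigenvectorBasis i) := by
  rw [← Matrix.mulVec_mulVec, hA.mulVec_eigenvectorBasis, Matrix.mulVec_smul,
    ← Matrix.conjTranspose_eq_transpose_of_trivial, hA.eq, hA.mulVec_eigenvectorBasis, smul_smul,
    sq]

lemma dotProduct_eq_sum_eigenvectorBasis (hA : A.IsHermitian) (x y : ι → ℝ) :
    x ⬝ᵥ y = ∑ i, (x ⬝ᵥ ⇑(hA.eigenvectorBasis i)) * (⇑(hA.eigenvectorBasis i) ⬝ᵥ y) := by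
  have := hA.eigenvectorBasis.sum_inner_mul_inner (WithLp.toLp 2 y) (WithLp.toLp 2 x)
  simp only [EuclideanSpace.inner_eq_star_dotProduct, star_trivial] at this
  rw [← this]
  exact Finset.sum_congr rfl fun i _ => by rw [mul_comm, dotProduct_comm x]

lemma mul_dotProduct_self_le (hA : A.IsHermitian) {s : ℝ}
    (hs : ∀ i, hA.eigenvalues i ≠ 0 → s ≤ hA.eigenvalues i) {w : ι → ℝ}
    (hw : ∀ v, A *ᵥ v = 0 → w ⬝ᵥ v = 0) :
    s * (w ⬝ᵥ w) ≤ w ⬝ᵥ (A *ᵥ w) := by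
  set u : ι → ι → ℝ := fun i => ⇑(hA.eigenvectorBasis i)
  have hAu : ∀ i, (A *ᵥ w) ⬝ᵥ u i = hA.eigenvalues i * (w ⬝ᵥ u i) := fun i => by
    rw [dotProduct_comm, Matrix.dotProduct_mulVec, ← Matrix.mulVec_transpose,
      ← Matrix.conjTranspose_eq_transpose_of_trivial, hA.eq, hA.mulVec_eigenvectorBasis,
      dotProduct_comm, dotProduct_smul, smul_eq_mul]
  rw [hA.dotProduct_eq_sum_eigenvectorBasis w w, dotProduct_comm w,
    hA.dotProduct_eq_sum_eigenvectorBasis (A *ᵥ w) w, Finset.mul_sum]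
  refine Finset.sum_le_sum fun i _ => ?_
  rw [hAu, dotProduct_comm (u i) w]
  by_cases hi : hA.eigenvalues i = 0
  · have hwi : w ⬝ᵥ u i = 0 := hw _ (by rw [hA.mulVec_eigenvectorBasis, hi, zero_smul])
    simp [hwi]
  · nlinarith [mul_le_mul_of_nonneg_right (hs i hi) (mul_self_nonneg (w ⬝ᵥ u i))]

end Matrix.IsHermitian

lemma mem_spectrum_of_mulVec_eq_smul {ι : Type*} [Fintype ι] [DecidableEq ι]
    {B : Matrix ι ι ℝ} {v : ι → ℝ} (hv : v ≠ 0) {t : ℝ} (h : B *ᵥ v = t • v) :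
    t ∈ spectrum ℝ B := by
  rw [spectrum.mem_iff, Matrix.isUnit_iff_isUnit_det, isUnit_iff_ne_zero, not_not,
    ← Matrix.exists_mulVec_eq_zero_iff]
  refine ⟨v, hv, ?_⟩
  rw [Matrix.sub_mulVec, h, Algebra.algebraMap_eq_smul_one, Matrix.smul_mulVec,
    Matrix.one_mulVec, sub_self]

section SigmaMinPos

variable {m d : ℕ} {A : Matrix (Fin m) (Fin d) ℝ} {v : Fin d → ℝ} {s : ℝ}

lemma sigmaMinPos_le (hv : v ≠ 0) (hs : 0 < s) (h : (Aᵀ * A) *ᵥ v = (s ^ 2) • v) :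
    sigmaMinPos A ≤ s :=
  csInf_le ⟨0, fun _ ht => ht.1.le⟩ ⟨hs, v, hv, h⟩

lemma sigmaMinPos_pos (hv : v ≠ 0) (hs : 0 < s) (h : (Aᵀ * A) *ᵥ v = (s ^ 2) • v) :
    0 < sigmaMinPos A := by
  set T := {s : ℝ | 0 < s ∧ ∃ v : Fin d → ℝ, v ≠ 0 ∧ (Aᵀ * A) *ᵥ v = (s ^ 2) • v}
  -- `T` is finite because squaring maps it into the spectrum of `Aᵀ * A`
  have hfin : T.Finite := (Matrix.finite_real_spectrum (A := Aᵀ * A)).image Real.sqrt |>.subset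
    fun t ⟨ht, w, hw, hwt⟩ => ⟨t ^ 2, mem_spectrum_of_mulVec_eq_smul hw hwt, Real.sqrt_sq ht.le⟩
  have hne : T.Nonempty := ⟨s, hs, v, hv, h⟩
  exact (hne.csInf_mem hfin).1

end SigmaMinPos

lemma Matrix.IsHermitian.sigmaMinPos_le_eigenvalues {d : ℕ} {A : Matrix (Fin d) (Fin d) ℝ}
    (hA : A.IsHermitian) {i : Fin d} (hi : 0 < hA.eigenvalues i) :
    sigmaMinPos A ≤ hA.eigenvalues i :=
  sigmaMinPos_le (hA.eigenvectorBasis_ne_zero i) hi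
    (hA.transpose_mul_self_mulVec_eigenvectorBasis i)

section WeightedGram

variable {n d : ℕ} (X : Matrix (Fin n) (Fin d) ℝ) {m : Fin n → ℝ}

lemma posSemidef_transpose_mul_diagonal_mul (hm : ∀ i, 0 ≤ m i) :
    (Xᵀ * Matrix.diagonal m * X).PosSemidef := by
  simpa [Matrix.conjTranspose_eq_transpose_of_trivial] using
    (Matrix.PosSemidef.diagonal (fun i => hm i : 0 ≤ m)).conjTranspose_mul_mul_same X

variable {X}

lemma mulVec_eq_zero_of_transpose_mul_diagonal_mul_mulVec_eq_zero (hm : ∀ i, 0 < m i)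
    {v : Fin d → ℝ} (hv : (Xᵀ * Matrix.diagonal m * X) *ᵥ v = 0) : X *ᵥ v = 0 := by
  have hsum := dotProduct_transpose_diagonal_mul_mulVec X m v
  rw [hv, dotProduct_zero, eq_comm,
    Finset.sum_eq_zero_iff_of_nonneg fun i _ => mul_nonneg (hm i).le (sq_nonneg _)] at hsum
  funext i
  simpa [(hm i).ne'] using hsum i (Finset.mem_univ i)

lemma sigmaMinPos_mul_dotProduct_self_le (hm : ∀ i, 0 < m i) {w : Fin d → ℝ}
    (hw : perpKer X w) :
    sigmaMinPos (Xᵀ * Matrix.diagonal m * X) * (w ⬝ᵥ w)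
      ≤ w ⬝ᵥ ((Xᵀ * Matrix.diagonal m * X) *ᵥ w) := by
  have hG := posSemidef_transpose_mul_diagonal_mul X fun i => (hm i).le
  refine hG.isHermitian.mul_dotProduct_self_le (fun i hi => ?_)
    fun v hv => hw v (mulVec_eq_zero_of_transpose_mul_diagonal_mul_mulVec_eq_zero hm hv)
  exact hG.isHermitian.sigmaMinPos_le_eigenvalues ((hG.eigenvalues_nonneg i).lt_of_ne' hi)

lemma sigmaMinPos_transpose_mul_diagonal_mul_pos (hX : X ≠ 0) (hm : ∀ i, 0 < m i) :
    0 < sigmaMinPos (Xᵀ * Matrix.diagonal m * X) := by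
  have hG := posSemidef_transpose_mul_diagonal_mul X fun i => (hm i).le
  have hG0 : Xᵀ * Matrix.diagonal m * X ≠ 0 := fun h0 => hX <| Matrix.ext_iff_mulVec.2 fun v => by
    rw [Matrix.zero_mulVec]
    exact mulVec_eq_zero_of_transpose_mul_diagonal_mul_mulVec_eq_zero hm
      (by rw [h0, Matrix.zero_mulVec])
  obtain ⟨i, hi⟩ := Function.ne_iff.1 (hG.isHermitian.eigenvalues_eq_zero_iff.not.2 hG0)
  exact sigmaMinPos_pos (hG.isHermitian.eigenvectorBasis_ne_zero i)
    ((hG.eigenvalues_nonneg i).lt_of_ne' hi)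
    (hG.isHermitian.transpose_mul_self_mulVec_eigenvectorBasis i)

end WeightedGram

section Expectation

variable {Ω : Type*} [MeasurableSpace Ω] {μ : Measure Ω} {n d : ℕ} {e : Ω → Fin n → ℝ}

lemma integrable_dotProduct_transpose_diagonal_mul_mulVec (he : ∀ i, Integrable (e · i) μ)
    (X : Matrix (Fin n) (Fin d) ℝ) (w : Fin d → ℝ) :
    Integrable (fun ω => w ⬝ᵥ ((Xᵀ * Matrix.diagonal (e ω) * X) *ᵥ w)) μ := by
  simp only [dotProduct_transpose_diagonal_mul_mulVec]
  exact integrable_finsetSum _ fun i _ => (he i).mul_const _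

lemma integral_dotProduct_transpose_diagonal_mul_mulVec (he : ∀ i, Integrable (e · i) μ)
    (X : Matrix (Fin n) (Fin d) ℝ) (w : Fin d → ℝ) :
    ∫ ω, w ⬝ᵥ ((Xᵀ * Matrix.diagonal (e ω) * X) *ᵥ w) ∂μ
      = w ⬝ᵥ ((Xᵀ * Matrix.diagonal (fun i => ∫ ω, e ω i ∂μ) * X) *ᵥ w) := by
  simp only [dotProduct_transpose_diagonal_mul_mulVec]
  rw [integral_finsetSum _ fun i _ => (he i).mul_const _]
  simp only [integral_mul_const]

lemma integral_le_one_sub_mul_integral [IsProbabilityMeasure μ] {f q : Ω → ℝ} (hf : 0 ≤ᵐ[μ] f)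
    (hq : Integrable q μ) {c : ℝ} (hfq : ∀ᵐ ω ∂μ, f ω ≤ 1 - c * q ω) :
    ∫ ω, f ω ∂μ ≤ 1 - c * ∫ ω, q ω ∂μ := by
  have hg : Integrable (fun ω => 1 - c * q ω) μ := (integrable_const 1).sub (hq.const_mul c)
  calc ∫ ω, f ω ∂μ ≤ ∫ ω, 1 - c * q ω ∂μ := integral_mono_of_nonneg hf hg hfq
    _ = 1 - c * ∫ ω, q ω ∂μ := by
      rw [integral_sub (integrable_const 1) (hq.const_mul c), integral_const_mul]
      simp

end Expectation

lemma Matrix.pos_of_isUnit_det_diagonal {ι : Type*} [Fintype ι] [DecidableEq ι] {m : ι → ℝ}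
    (hm : ∀ i, 0 ≤ m i) (h : IsUnit (Matrix.diagonal m).det) (i : ι) : 0 < m i := by
  rw [Matrix.det_diagonal, isUnit_iff_ne_zero, Finset.prod_ne_zero_iff] at h
  exact (hm i).lt_of_ne' (h i (Finset.mem_univ i))

theorem randomly_weighted_gd_stmt13_general {n d : ℕ}
    {Ω : Type*} [MeasurableSpace Ω] (μ : Measure Ω) [IsProbabilityMeasure μ]
    (X : Matrix (Fin n) (Fin d) ℝ) (hX : X ≠ 0)
    (D : Ω → Fin n → ℝ)
    (τ : ℝ) (hτ : ∀ᵐ ω ∂μ, specNorm (Matrix.diagonal (D ω)) ≤ τ)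
    (M2 : Matrix (Fin n) (Fin n) ℝ)
    (hM2 : M2 = Matrix.diagonal fun i => ∫ ω, (D ω i) ^ 2 ∂μ)
    (hM2unit : IsUnit M2.det)
    (α : ℝ) (hα0 : 0 < α)
    (hα : α * τ ^ 2 * specNorm (Xᵀ * X) < 2) :
    (∀ w : Fin d → ℝ, l2norm w = 1 → perpKer X w →
      ∫ ω, (l2norm (((1 : Matrix (Fin d) (Fin d) ℝ)
          - α • (Xᵀ * Matrix.diagonal (fun i => (D ω i) ^ 2) * X)) *ᵥ w)) ^ 2 ∂μ
        ≤ 1 - α * (2 - α * τ ^ 2 * specNorm (Xᵀ * X)) * sigmaMinPos (Xᵀ * M2 * X))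
    ∧ 1 - α * (2 - α * τ ^ 2 * specNorm (Xᵀ * X)) * sigmaMinPos (Xᵀ * M2 * X) < 1 := by
  subst hM2
  simp only [specNorm_eq_l2_opNorm] at hτ hα ⊢
  set c := α * (2 - α * τ ^ 2 * ‖Xᵀ * X‖)
  have hc : 0 < c := mul_pos hα0 (by linarith)
  have hm : ∀ i, 0 < ∫ ω, D ω i ^ 2 ∂μ :=
    Matrix.pos_of_isUnit_det_diagonal (fun i => integral_nonneg fun ω => sq_nonneg _) hM2unit
  have hint : ∀ i, Integrable (fun ω => D ω i ^ 2) μ :=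
    fun i => Integrable.of_integral_ne_zero (hm i).ne'
  refine ⟨fun w hw hperp => ?_,
    sub_lt_self _ (mul_pos hc (sigmaMinPos_transpose_mul_diagonal_mul_pos hX hm))⟩
  have hstep : ∀ᵐ ω ∂μ, l2norm (((1 : Matrix (Fin d) (Fin d) ℝ)
      - α • (Xᵀ * Matrix.diagonal (fun i => (D ω i) ^ 2) * X)) *ᵥ w) ^ 2
        ≤ 1 - c * (w ⬝ᵥ ((Xᵀ * Matrix.diagonal (fun i => (D ω i) ^ 2) * X) *ᵥ w)) := by
    filter_upwards [hτ] with ω hω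
    refine sq_l2norm_sub_smul_mulVec_le X (fun i => sq_nonneg _) (fun i => ?_) hw α
    simpa using pow_le_pow_left₀ (abs_nonneg _) ((abs_le_l2_opNorm_diagonal _ i).trans hω) 2
  have hσ := sigmaMinPos_mul_dotProduct_self_le hm hperp
  rw [← sq_l2norm, hw, one_pow, mul_one] at hσ
  calc _ ≤ 1 - c * ∫ ω, w ⬝ᵥ ((Xᵀ * Matrix.diagonal (fun i => (D ω i) ^ 2) * X) *ᵥ w) ∂μ :=
        integral_le_one_sub_mul_integral (ae_of_all _ fun _ => sq_nonneg _)
          (integrable_dotProduct_transpose_diagonal_mul_mulVec hint X w) hstep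
    _ ≤ _ := by
        rw [integral_dotProduct_transpose_diagonal_mul_mulVec hint]
        gcongr

/-- key contraction estimate for GMC.
If `‖D‖ ≤ τ` almost surely, `M₂ = E[D²]` is non-singular, and
`α τ² ‖𝕏‖ < 2`, then for every unit vector `w ⊥ ker X`,
`E[‖(I - α XᵀD²X) w‖₂²] ≤ 1 - α(2 - ατ²‖𝕏‖) σ⁺min(𝕏̂) < 1`. -/
theorem randomly_weighted_gd_stmt13 {n d : ℕ}
    {Ω : Type*} [MeasurableSpace Ω] (μ : Measure Ω) [IsProbabilityMeasure μ]
    (X : Matrix (Fin n) (Fin d) ℝ) (hX : X ≠ 0)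
    (D : Ω → Fin n → ℝ) (hmeas : Measurable D)
    (τ : ℝ) (hτ : ∀ᵐ ω ∂μ, specNorm (Matrix.diagonal (D ω)) ≤ τ)
    (M2 : Matrix (Fin n) (Fin n) ℝ)
    (hM2 : M2 = Matrix.diagonal fun i => ∫ ω, (D ω i) ^ 2 ∂μ)
    (hM2unit : IsUnit M2.det)
    (α : ℝ) (hα0 : 0 < α)
    (hα : α * τ ^ 2 * specNorm (Xᵀ * X) < 2) :
    (∀ w : Fin d → ℝ, l2norm w = 1 → perpKer X w →
      ∫ ω, (l2norm (((1 : Matrix (Fin d) (Fin d) ℝ)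
          - α • (Xᵀ * Matrix.diagonal (fun i => (D ω i) ^ 2) * X)) *ᵥ w)) ^ 2 ∂μ
        ≤ 1 - α * (2 - α * τ ^ 2 * specNorm (Xᵀ * X)) * sigmaMinPos (Xᵀ * M2 * X))
    ∧ 1 - α * (2 - α * τ ^ 2 * specNorm (Xᵀ * X)) * sigmaMinPos (Xᵀ * M2 * X) < 1 :=
  randomly_weighted_gd_stmt13_general μ X hX D τ hτ M2 hM2 hM2unit α hα0 hα
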